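/- arXiv:2511.23329 — 5 statements merged into one kernel-verified Lean document; each statement's English description precedes it below -/
import Mathlib

section
/- For ε > 0 and z ∈ [−1,1], with A_ε(z) = z·arctan(z/ε)/arctan(1/ε) − (ε/(2·arctan(1/ε)))·log(1 + z²/ε²), the quantity |A_ε(z) − |z|| is bounded by C·ε·log(1/ε) for some constant C > 0 independent of z and of sufficiently small ε. -/
set_option maxHeartbeats 1000000

open Real

lemma my_arctan_le_self {x : ℝ} (hx : 0 ≤ x) : Real.arctan x ≤ x := by
  have h1 : 0 ≤ Real.arctan x := by
    rw [← Real.arctan_zero]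
    exact Real.arctan_strictMono.monotone hx
  calc Real.arctan x ≤ Real.tan (Real.arctan x) :=
        Real.le_tan h1 (Real.arctan_lt_pi_div_two x)
    _ = x := Real.tan_arctan x

theorem arctan_regularization_error_bound :
    ∃ C > (0:ℝ), ∃ ε₀ > (0:ℝ), ∀ ε : ℝ, 0 < ε → ε ≤ ε₀ →
      ∀ z ∈ Set.Icc (-1:ℝ) 1,
        abs ((z * Real.arctan (z / ε) / Real.arctan (1 / ε) -
            (ε / (2 * Real.arctan (1 / ε))) * Real.log (1 + z ^ 2 / ε ^ 2)) - |z|)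
          ≤ C * ε * Real.log (1 / ε) := by
  refine ⟨3, by norm_num, 1/6, by norm_num, ?_⟩
  intro ε hε hε6 z hz
  obtain ⟨hz1, hz2⟩ := hz
  have hzabs : |z| ≤ 1 := abs_le.mpr ⟨hz1, hz2⟩
  have hε1 : ε ≤ 1 := by linarith
  set a := Real.arctan (1/ε) with ha_def
  -- a ≥ π/4
  have ha4 : π/4 ≤ a := by
    rw [← Real.arctan_one]
    exact Real.arctan_strictMono.monotone (by rw [le_div_iff₀ hε]; linarith)
  have ha_pos : 0 < a := lt_of_lt_of_le (by positivity) ha4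
  have ha_inv : 1/a ≤ 4/π := by
    rw [div_le_div_iff₀ ha_pos Real.pi_pos]
    nlinarith [Real.pi_pos]
  -- log(1/ε) ≥ 1 + log 2
  have hlog6 : Real.log 6 ≤ Real.log (1/ε) :=
    Real.log_le_log (by norm_num) (by rw [le_div_iff₀ hε]; linarith)
  have hlog2 : (0:ℝ) < Real.log 2 := Real.log_pos (by norm_num)
  have h1log2 : 1 + Real.log 2 ≤ Real.log (1/ε) := by
    have he : Real.exp 1 < 3 := by
      have := Real.exp_one_lt_d9; linarith
    have h3 : 1 ≤ Real.log 3 := by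
      rw [Real.le_log_iff_exp_le (by norm_num)]; linarith
    have : Real.log 6 = Real.log 3 + Real.log 2 := by
      rw [← Real.log_mul (by norm_num) (by norm_num)]; norm_num
    linarith
  have hL_pos : 0 < Real.log (1/ε) := by linarith
  -- Key 1 : |z * arctan(z/ε) - |z| * a| ≤ ε
  have key1 : |z * Real.arctan (z/ε) - |z| * a| ≤ ε := by
    have hrw : z * Real.arctan (z/ε) = |z| * Real.arctan (|z|/ε) := by
      rcases abs_cases z with ⟨h, _⟩ | ⟨h, hneg⟩
      · rw [h]
      · rw [h, neg_div, Real.arctan_neg]; ring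
    rw [hrw]
    rcases eq_or_ne z 0 with rfl | hz0
    · simp [hε.le]
    · have ht : 0 < |z| := abs_pos.mpr hz0
      have hmono : Real.arctan (|z|/ε) ≤ a :=
        Real.arctan_strictMono.monotone (by gcongr)
      have harc1 : a = π/2 - Real.arctan ε := by
        rw [ha_def, one_div]; exact Real.arctan_inv_of_pos hε
      have harc2 : Real.arctan (|z|/ε) = π/2 - Real.arctan (ε/|z|) := by
        have h' : |z|/ε = (ε/|z|)⁻¹ := by rw [inv_div]
        rw [h']; exact Real.arctan_inv_of_pos (by positivity)
      have hdiff : a - Real.arctan (|z|/ε) ≤ ε/|z| := by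
        rw [harc1, harc2]
        have h1 : Real.arctan (ε/|z|) ≤ ε/|z| := my_arctan_le_self (div_nonneg hε.le (abs_nonneg z))
        have h2 : 0 ≤ Real.arctan ε := by
          rw [← Real.arctan_zero]; exact Real.arctan_strictMono.monotone hε.le
        linarith
      have hneg' : |z| * Real.arctan (|z|/ε) - |z| * a
          = -(|z| * (a - Real.arctan (|z|/ε))) := by ring
      rw [hneg', abs_neg, abs_of_nonneg (mul_nonneg (abs_nonneg z) (by linarith))]
      calc |z| * (a - Real.arctan (|z|/ε)) ≤ |z| * (ε/|z|) :=
            mul_le_mul_of_nonneg_left hdiff ht.le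
        _ = ε := by field_simp
  -- Key 2 : log(1 + z²/ε²) ≤ 2*(log 2 + log(1/ε)), and it's nonneg
  have hq_pos : (0:ℝ) < 1 + z^2/ε^2 := by positivity
  have hlog_nonneg : 0 ≤ Real.log (1 + z^2/ε^2) := Real.log_nonneg (le_add_of_nonneg_right (by positivity))
  have key2 : Real.log (1 + z^2/ε^2) ≤ 2 * (Real.log 2 + Real.log (1/ε)) := by
    have hle : 1 + z^2/ε^2 ≤ (2/ε)^2 := by
      have hz2 : z^2 ≤ 1 := by nlinarith
      have hdivle : z^2/ε^2 ≤ 1/ε^2 := by gcongr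
      have hε2 : ε^2 ≤ 1 := by nlinarith
      rw [div_pow, le_div_iff₀ (by positivity : (0:ℝ) < ε^2)]
      have hmul : z^2/ε^2 * ε^2 = z^2 := by field_simp
      nlinarith
    calc Real.log (1 + z^2/ε^2) ≤ Real.log ((2/ε)^2) := Real.log_le_log hq_pos hle
      _ = 2 * Real.log (2/ε) := by rw [Real.log_pow]; norm_num
      _ = 2 * (Real.log 2 + Real.log (1/ε)) := by
          rw [Real.log_div (by norm_num) hε.ne', Real.log_div (by norm_num) hε.ne',
            Real.log_one]
          ring
  -- combine
  have hmain : abs ((z * Real.arctan (z/ε) / a - (ε / (2*a)) * Real.log (1 + z^2/ε^2)) - |z|)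
      ≤ (1/a) * (ε + ε * (Real.log 2 + Real.log (1/ε))) := by
    have hrw : z * Real.arctan (z/ε) / a - (ε / (2*a)) * Real.log (1 + z^2/ε^2) - |z|
        = (1/a) * ((z * Real.arctan (z/ε) - |z| * a) - (ε/2) * Real.log (1 + z^2/ε^2)) := by
      field_simp; ring
    rw [hrw, abs_mul, abs_of_pos (by positivity : (0:ℝ) < 1/a)]
    apply mul_le_mul_of_nonneg_left _ (by positivity)
    calc abs ((z * Real.arctan (z/ε) - |z| * a) - (ε/2) * Real.log (1 + z^2/ε^2))
        ≤ |z * Real.arctan (z/ε) - |z| * a| + |(ε/2) * Real.log (1 + z^2/ε^2)| :=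
          abs_sub _ _
      _ ≤ ε + ε * (Real.log 2 + Real.log (1/ε)) := by
          have h2 : |(ε/2) * Real.log (1 + z^2/ε^2)| = (ε/2) * Real.log (1 + z^2/ε^2) :=
            abs_of_nonneg (by positivity)
          rw [h2]
          have := mul_le_mul_of_nonneg_left key2 (by positivity : (0:ℝ) ≤ ε/2)
          linarith
  refine hmain.trans ?_
  have hstep : ε + ε * (Real.log 2 + Real.log (1/ε)) ≤ 2 * (ε * Real.log (1/ε)) := by
    nlinarith
  calc (1/a) * (ε + ε * (Real.log 2 + Real.log (1/ε)))
      ≤ (4/π) * (2 * (ε * Real.log (1/ε))) := by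
        apply mul_le_mul ha_inv hstep (by positivity)
        positivity
    _ ≤ 3 * ε * Real.log (1/ε) := by
        have hπ : (8:ℝ)/3 < π := by nlinarith [Real.pi_gt_d6]
        rw [div_mul_eq_mul_div, div_le_iff₀ Real.pi_pos]
        nlinarith [mul_pos hε hL_pos]
end

section
/- Let ρ ∈ (0,1], and let s_ε : ℝ → ℝ be differentiable with |s_ε(z)| ≤ 1 on [−1,1] and |s_ε'(z)| ≤ m_ε on [−1,1]. Then for all a, b, c, d ∈ [ρ,1]: |(min(a,b)/max(a,b))·s_ε(a−b) − (min(c,d)/max(c,d))·s_ε(c−d)| ≤ (1/ρ + m_ε)·(|a − c| + |b − d|). -/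
private lemma rearr (a b c d : ℝ) (hab : a ≤ b) (hdc : d ≤ c) :
    |a - d| + |b - c| ≤ |a - c| + |b - d| := by
  rcases abs_cases (a - d) with ⟨h1, _⟩ | ⟨h1, _⟩ <;>
  rcases abs_cases (b - c) with ⟨h2, _⟩ | ⟨h2, _⟩ <;>
  rcases abs_cases (a - c) with ⟨h3, h3'⟩ | ⟨h3, h3'⟩ <;>
  rcases abs_cases (b - d) with ⟨h4, h4'⟩ | ⟨h4, h4'⟩ <;> linarith

private lemma ratio_lip (ρ : ℝ) (hρ0 : 0 < ρ) (x y u v : ℝ)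
    (hx : x ∈ Set.Icc ρ 1) (hy : y ∈ Set.Icc ρ 1)
    (hu : u ∈ Set.Icc ρ 1) (hv : v ∈ Set.Icc ρ 1)
    (hxy : x ≤ y) (huv : u ≤ v) :
    |x / y - u / v| ≤ (1 / ρ) * (|x - u| + |y - v|) := by
  have hy0 : 0 < y := lt_of_lt_of_le hρ0 hy.1
  have hv0 : 0 < v := lt_of_lt_of_le hρ0 hv.1
  have heq : x / y - u / v = ((x - u) * v + u * (v - y)) / (y * v) := by
    field_simp; ring
  rw [heq, abs_div, abs_of_pos (mul_pos hy0 hv0), div_le_iff₀ (mul_pos hy0 hv0)]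
  have h1 : |(x - u) * v + u * (v - y)| ≤ |x - u| * v + u * |v - y| := by
    calc |(x - u) * v + u * (v - y)| ≤ |(x - u) * v| + |u * (v - y)| := abs_add_le _ _
    _ = |x - u| * v + u * |v - y| := by
        rw [abs_mul, abs_mul, abs_of_pos hv0, abs_of_pos (lt_of_lt_of_le hρ0 hu.1)]
  refine h1.trans ?_
  have hvy : |v - y| = |y - v| := abs_sub_comm _ _
  rw [hvy]
  have hρy : ρ ≤ y := hy.1
  have habs1 : (0:ℝ) ≤ |x - u| := abs_nonneg _
  have habs2 : (0:ℝ) ≤ |y - v| := abs_nonneg _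
  have hu0 : 0 < u := lt_of_lt_of_le hρ0 hu.1
  have h2 : ρ * v ≤ y * v := by nlinarith
  have h3 : ρ * u ≤ y * v := by nlinarith
  have key : (|x - u| * v + u * |y - v|) * ρ ≤ (|x - u| + |y - v|) * (y * v) := by
    nlinarith [mul_le_mul_of_nonneg_left h2 habs1, mul_le_mul_of_nonneg_left h3 habs2]
  calc |x - u| * v + u * |y - v| = (|x - u| * v + u * |y - v|) * ρ / ρ := by
        field_simp
    _ ≤ (|x - u| + |y - v|) * (y * v) / ρ := by gcongr
    _ = 1 / ρ * (|x - u| + |y - v|) * (y * v) := by ring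

theorem r_function_lipschitz (ρ : ℝ) (hρ : ρ ∈ Set.Ioc (0:ℝ) 1)
    (sε : ℝ → ℝ) (mε : ℝ) (hdiff : Differentiable ℝ sε)
    (hs : ∀ z ∈ Set.Icc (-1:ℝ) 1, |sε z| ≤ 1)
    (hs' : ∀ z ∈ Set.Icc (-1:ℝ) 1, |deriv sε z| ≤ mε)
    (a b c d : ℝ) (ha : a ∈ Set.Icc ρ 1) (hb : b ∈ Set.Icc ρ 1)
    (hc : c ∈ Set.Icc ρ 1) (hd : d ∈ Set.Icc ρ 1) :
    |min a b / max a b * sε (a - b) - min c d / max c d * sε (c - d)|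
      ≤ (1 / ρ + mε) * (|a - c| + |b - d|) := by
  obtain ⟨hρ0, hρ1⟩ := hρ
  have hρinv : (0:ℝ) ≤ 1 / ρ := by positivity
  set P := |a - c| + |b - d| with hP
  have hP0 : 0 ≤ P := add_nonneg (abs_nonneg _) (abs_nonneg _)
  -- ratio bound
  have hratio : |min a b / max a b - min c d / max c d| ≤ (1 / ρ) * P := by
    rcases le_total a b with hab | hab <;> rcases le_total c d with hcd | hcd
    · rw [min_eq_left hab, max_eq_right hab, min_eq_left hcd, max_eq_right hcd]
      exact ratio_lip ρ hρ0 a b c d ha hb hc hd hab hcd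
    · rw [min_eq_left hab, max_eq_right hab, min_eq_right hcd, max_eq_left hcd]
      have := ratio_lip ρ hρ0 a b d c ha hb hd hc hab hcd
      have h2 := rearr a b c d hab hcd
      calc |a / b - d / c| ≤ (1 / ρ) * (|a - d| + |b - c|) := this
        _ ≤ (1 / ρ) * P := by apply mul_le_mul_of_nonneg_left _ hρinv; rw [hP]; linarith
    · rw [min_eq_right hab, max_eq_left hab, min_eq_left hcd, max_eq_right hcd]
      have := ratio_lip ρ hρ0 b a c d hb ha hc hd hab hcd
      have h2 := rearr b a d c hab hcd
      calc |b / a - c / d| ≤ (1 / ρ) * (|b - c| + |a - d|) := this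
        _ ≤ (1 / ρ) * P := by
            apply mul_le_mul_of_nonneg_left _ hρinv
            rw [hP]; linarith
    · rw [min_eq_right hab, max_eq_left hab, min_eq_right hcd, max_eq_left hcd]
      have := ratio_lip ρ hρ0 b a d c hb ha hd hc hab hcd
      calc |b / a - d / c| ≤ (1 / ρ) * (|b - d| + |a - c|) := this
        _ = (1 / ρ) * P := by rw [hP]; ring
  -- Lipschitz bound on sε
  have hmem1 : a - b ∈ Set.Icc (-1:ℝ) 1 := by
    constructor <;> [linarith [ha.1, hb.2, hρ1]; linarith [ha.2, hb.1, hρ0]]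
  have hmem2 : c - d ∈ Set.Icc (-1:ℝ) 1 := by
    constructor <;> [linarith [hc.1, hd.2, hρ1]; linarith [hc.2, hd.1, hρ0]]
  have hmε0 : 0 ≤ mε := le_trans (abs_nonneg _) (hs' 0 ⟨by norm_num, by norm_num⟩)
  have hlip : |sε (a - b) - sε (c - d)| ≤ mε * |(a - b) - (c - d)| := by
    have hconv : Convex ℝ (Set.Icc (-1:ℝ) 1) := convex_Icc _ _
    have := hconv.norm_image_sub_le_of_norm_deriv_le
      (fun z _ => hdiff z)
      (fun z hz => by rw [Real.norm_eq_abs]; exact hs' z hz) hmem2 hmem1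
    simpa [Real.norm_eq_abs] using this
  have hsdiff : |sε (a - b) - sε (c - d)| ≤ mε * P := by
    refine hlip.trans (mul_le_mul_of_nonneg_left ?_ hmε0)
    calc |(a - b) - (c - d)| = |(a - c) + (d - b)| := by ring_nf
      _ ≤ |a - c| + |d - b| := abs_add_le _ _
      _ = P := by rw [hP, abs_sub_comm d b]
  -- bounds on the ratios and sε values
  have hmax0 : 0 < max c d := lt_of_lt_of_le hρ0 (le_max_of_le_left hc.1)
  have hmin0 : 0 ≤ min c d := le_min (le_trans hρ0.le hc.1) (le_trans hρ0.le hd.1)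
  have hR2a : 0 ≤ min c d / max c d := div_nonneg hmin0 hmax0.le
  have hR2b : min c d / max c d ≤ 1 := div_le_one_of_le₀ (min_le_max) hmax0.le
  have hs1 : |sε (a - b)| ≤ 1 := hs _ hmem1
  -- final assembly
  have key : min a b / max a b * sε (a - b) - min c d / max c d * sε (c - d)
      = (min a b / max a b - min c d / max c d) * sε (a - b)
        + (min c d / max c d) * (sε (a - b) - sε (c - d)) := by ring
  rw [key]
  calc |(min a b / max a b - min c d / max c d) * sε (a - b)
        + (min c d / max c d) * (sε (a - b) - sε (c - d))|
      ≤ |(min a b / max a b - min c d / max c d) * sε (a - b)|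
        + |(min c d / max c d) * (sε (a - b) - sε (c - d))| := abs_add_le _ _
    _ = |min a b / max a b - min c d / max c d| * |sε (a - b)|
        + |min c d / max c d| * |sε (a - b) - sε (c - d)| := by rw [abs_mul, abs_mul]
    _ ≤ (1 / ρ) * P * 1 + 1 * (mε * P) := by
        have t1 : |min a b / max a b - min c d / max c d| * |sε (a - b)|
            ≤ (1 / ρ) * P * 1 :=
          mul_le_mul hratio hs1 (abs_nonneg _) (mul_nonneg hρinv hP0)
        have t2 : |min c d / max c d| * |sε (a - b) - sε (c - d)| ≤ 1 * (mε * P) :=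
          mul_le_mul (by rw [abs_of_nonneg hR2a]; exact hR2b) hsdiff (abs_nonneg _)
            zero_le_one
        linarith
    _ = (1 / ρ + mε) * P := by ring
end

section
/- Let S be a finite set, w a normalized nonnegative symmetric kernel on S (∑_y w(x,y) = 1), ρ ∈ (0,1], s_ε differentiable with |s_ε| ≤ 1 and |s_ε'| ≤ m_ε on [−1,1]. For I : S → [ρ,1] define R_I(x) = ∑_y w(x,y)·(min(I(x),I(y))/max(I(x),I(y)))·s_ε(I(x)−I(y)). Then for any two images I, Ĩ : S → [ρ,1] and any p ∈ [1,∞], ‖R_I − R_Ĩ‖_p ≤ 2(1/ρ + m_ε)·‖I − Ĩ‖_p. -/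
section AuxRLip

open Finset Set

private lemma q_lip_poly' {ρ a a' b : ℝ} (hρ : 0 < ρ) (ha1 : ρ ≤ a) (ha2 : a ≤ 1)
    (ha'1 : ρ ≤ a') (ha'2 : a' ≤ 1) (hb1 : ρ ≤ b) (hb2 : b ≤ 1) :
    ρ * |min a b * max a' b - max a b * min a' b| ≤ |a - a'| * (max a b * max a' b) := by
  rcases le_total a b with h1 | h1 <;> rcases le_total a' b with h2 | h2
  · rw [min_eq_left h1, max_eq_right h1, min_eq_left h2, max_eq_right h2,
      show a * b - b * a' = b * (a - a') by ring, abs_mul,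
      abs_of_nonneg (by linarith : (0:ℝ) ≤ b)]
    nlinarith [abs_nonneg (a - a'), mul_le_mul_of_nonneg_left
      (mul_le_mul_of_nonneg_right hb1 (by linarith : (0:ℝ) ≤ b)) (abs_nonneg (a - a'))]
  · rw [min_eq_left h1, max_eq_right h1, min_eq_right h2, max_eq_left h2]
    rcases abs_cases (a - a') with ⟨e1, f1⟩ | ⟨e1, f1⟩ <;> rw [e1] <;>
      rcases abs_cases (a * a' - b * b) with ⟨e2, f2⟩ | ⟨e2, f2⟩ <;> rw [e2] <;>
      nlinarith [mul_nonneg (sub_nonneg.2 h1) (sub_nonneg.2 h2),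
        mul_nonneg (mul_nonneg (sub_nonneg.2 h1) (by linarith : (0:ℝ) ≤ a' + b)) hρ.le,
        mul_nonneg (mul_nonneg (sub_nonneg.2 h2) (by linarith : (0:ℝ) ≤ a + b)) hρ.le,
        mul_nonneg (mul_nonneg (sub_nonneg.2 (h1.trans h2)) (sub_nonneg.2 hb1)) (by linarith : (0:ℝ) ≤ a'),
        mul_nonneg (mul_nonneg (sub_nonneg.2 (h1.trans h2)) (sub_nonneg.2 ha'1)) (by linarith : (0:ℝ) ≤ b)]
  · rw [min_eq_right h1, max_eq_left h1, min_eq_left h2, max_eq_right h2]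
    rcases abs_cases (a - a') with ⟨e1, f1⟩ | ⟨e1, f1⟩ <;> rw [e1] <;>
      rcases abs_cases (b * b - a * a') with ⟨e2, f2⟩ | ⟨e2, f2⟩ <;> rw [e2] <;>
      nlinarith [mul_nonneg (sub_nonneg.2 h1) (sub_nonneg.2 h2),
        mul_nonneg (mul_nonneg (sub_nonneg.2 h1) (by linarith : (0:ℝ) ≤ a' + b)) hρ.le,
        mul_nonneg (mul_nonneg (sub_nonneg.2 h2) (by linarith : (0:ℝ) ≤ a + b)) hρ.le,
        mul_nonneg (mul_nonneg (sub_nonneg.2 (h2.trans h1)) (sub_nonneg.2 hb1)) (by linarith : (0:ℝ) ≤ a),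
        mul_nonneg (mul_nonneg (sub_nonneg.2 (h2.trans h1)) (sub_nonneg.2 ha1)) (by linarith : (0:ℝ) ≤ b)]
  · rw [min_eq_right h1, max_eq_left h1, min_eq_right h2, max_eq_left h2,
      show b * a' - a * b = b * (a' - a) by ring, abs_mul,
      abs_of_nonneg (by linarith : (0:ℝ) ≤ b), abs_sub_comm a' a]
    nlinarith [abs_nonneg (a - a'), mul_le_mul_of_nonneg_left
      (mul_le_mul ha1 h2 (by linarith) (by linarith) : ρ * b ≤ a * a') (abs_nonneg (a - a'))]

private lemma q_lip' {ρ a a' b : ℝ} (hρ : 0 < ρ) (ha1 : ρ ≤ a) (ha2 : a ≤ 1)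
    (ha'1 : ρ ≤ a') (ha'2 : a' ≤ 1) (hb1 : ρ ≤ b) (hb2 : b ≤ 1) :
    |min a b / max a b - min a' b / max a' b| ≤ (1/ρ) * |a - a'| := by
  have hM : (0:ℝ) < max a b := lt_of_lt_of_le hρ (le_trans ha1 (le_max_left _ _))
  have hM' : (0:ℝ) < max a' b := lt_of_lt_of_le hρ (le_trans ha'1 (le_max_left _ _))
  have hMM' : (0:ℝ) < max a b * max a' b := mul_pos hM hM'
  rw [div_sub_div _ _ hM.ne' hM'.ne', abs_div, abs_of_pos hMM', div_le_iff₀ hMM']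
  have h := q_lip_poly' hρ ha1 ha2 ha'1 ha'2 hb1 hb2
  have hρi : (0:ℝ) < 1/ρ := by positivity
  calc |min a b * max a' b - max a b * min a' b|
      = (1/ρ) * (ρ * |min a b * max a' b - max a b * min a' b|) := by
        field_simp
    _ ≤ (1/ρ) * (|a - a'| * (max a b * max a' b)) :=
        mul_le_mul_of_nonneg_left h hρi.le
    _ = 1/ρ * |a - a'| * (max a b * max a' b) := by ring

private lemma g_lip' {ρ mε : ℝ} (hρ0 : 0 < ρ) (hρ1 : ρ ≤ 1) {sε : ℝ → ℝ}
    (hdiff : Differentiable ℝ sε)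
    (hs : ∀ z ∈ Set.Icc (-1:ℝ) 1, |sε z| ≤ 1)
    (hs' : ∀ z ∈ Set.Icc (-1:ℝ) 1, |deriv sε z| ≤ mε)
    {a a' b b' : ℝ} (ha : a ∈ Set.Icc ρ 1) (ha' : a' ∈ Set.Icc ρ 1)
    (hb : b ∈ Set.Icc ρ 1) (hb' : b' ∈ Set.Icc ρ 1) :
    |min a b / max a b * sε (a - b) - min a' b' / max a' b' * sε (a' - b')|
      ≤ (1/ρ + mε) * (|a - a'| + |b - b'|) := by
  obtain ⟨ha1, ha2⟩ := ha; obtain ⟨ha'1, ha'2⟩ := ha'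
  obtain ⟨hb1, hb2⟩ := hb; obtain ⟨hb'1, hb'2⟩ := hb'
  have hmem : ∀ u v : ℝ, ρ ≤ u → u ≤ 1 → ρ ≤ v → v ≤ 1 → u - v ∈ Set.Icc (-1:ℝ) 1 := by
    intro u v h1 h2 h3 h4; constructor <;> nlinarith
  have hslip : ∀ z ∈ Set.Icc (-1:ℝ) 1, ∀ z' ∈ Set.Icc (-1:ℝ) 1,
      |sε z - sε z'| ≤ mε * |z - z'| := by
    intro z hz z' hz'
    have := Convex.norm_image_sub_le_of_norm_deriv_le
      (f := sε) (s := Set.Icc (-1:ℝ) 1) (fun x _ => hdiff x) hs' (convex_Icc _ _) hz' hz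
    simpa [Real.norm_eq_abs] using this
  have hq : |min a b / max a b - min a' b' / max a' b'|
      ≤ (1/ρ) * (|a - a'| + |b - b'|) := by
    have h1 := q_lip' hρ0 ha1 ha2 ha'1 ha'2 hb1 hb2
    have h2 := q_lip' hρ0 hb1 hb2 hb'1 hb'2 ha'1 ha'2
    rw [min_comm b a', max_comm b a', min_comm b' a', max_comm b' a'] at h2
    calc |min a b / max a b - min a' b' / max a' b'|
        ≤ |min a b / max a b - min a' b / max a' b| +
          |min a' b / max a' b - min a' b' / max a' b'| := abs_sub_le _ _ _
      _ ≤ (1/ρ) * |a - a'| + (1/ρ) * |b - b'| := add_le_add h1 h2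
      _ = (1/ρ) * (|a - a'| + |b - b'|) := by ring
  have hmin' : (0:ℝ) < min a' b' := lt_min (hρ0.trans_le ha'1) (hρ0.trans_le hb'1)
  have hmax' : (0:ℝ) < max a' b' := hmin'.trans_le min_le_max
  have hq'01 : |min a' b' / max a' b'| ≤ 1 := by
    rw [abs_div, abs_of_pos hmin', abs_of_pos hmax']
    exact div_le_one_of_le₀ min_le_max hmax'.le
  have hsab : |sε (a - b)| ≤ 1 := hs _ (hmem a b ha1 ha2 hb1 hb2)
  have hsd : |sε (a - b) - sε (a' - b')| ≤ mε * (|a - a'| + |b - b'|) := by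
    have := hslip _ (hmem a b ha1 ha2 hb1 hb2) _ (hmem a' b' ha'1 ha'2 hb'1 hb'2)
    have habs : |a - b - (a' - b')| ≤ |a - a'| + |b - b'| := by
      calc |a - b - (a' - b')| = |(a - a') + -(b - b')| := by ring_nf
        _ ≤ |a - a'| + |-(b - b')| := abs_add_le _ _
        _ = |a - a'| + |b - b'| := by rw [abs_neg]
    have hmε : 0 ≤ mε := le_trans (abs_nonneg _) (hs' 0 ⟨by norm_num, by norm_num⟩)
    calc |sε (a - b) - sε (a' - b')| ≤ mε * |a - b - (a' - b')| := this
      _ ≤ mε * (|a - a'| + |b - b'|) := mul_le_mul_of_nonneg_left habs hmε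
  calc |min a b / max a b * sε (a - b) - min a' b' / max a' b' * sε (a' - b')|
      = |(min a b / max a b - min a' b' / max a' b') * sε (a - b)
          + min a' b' / max a' b' * (sε (a - b) - sε (a' - b'))| := by ring_nf
    _ ≤ |(min a b / max a b - min a' b' / max a' b') * sε (a - b)|
        + |min a' b' / max a' b' * (sε (a - b) - sε (a' - b'))| := abs_add_le _ _
    _ = |min a b / max a b - min a' b' / max a' b'| * |sε (a - b)|
        + |min a' b' / max a' b'| * |sε (a - b) - sε (a' - b')| := by rw [abs_mul, abs_mul]
    _ ≤ ((1/ρ) * (|a - a'| + |b - b'|)) * 1 + 1 * (mε * (|a - a'| + |b - b'|)) := by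
        apply add_le_add
        · exact mul_le_mul hq hsab (abs_nonneg _) (by positivity)
        · exact mul_le_mul hq'01 hsd (abs_nonneg _) zero_le_one
    _ = (1/ρ + mε) * (|a - a'| + |b - b'|) := by ring

private lemma pilp_mono' {S : Type*} [Fintype S] (p : ENNReal) [Fact (1 ≤ p)]
    (f g : S → ℝ) (h : ∀ x, |f x| ≤ |g x|) :
    ‖(WithLp.equiv p (S → ℝ)).symm f‖ ≤ ‖(WithLp.equiv p (S → ℝ)).symm g‖ := by
  rcases eq_or_ne p ⊤ with hp | hp
  · subst hp
    rw [WithLp.equiv_symm_apply, PiLp.norm_toLp, PiLp.norm_toLp, Pi.norm_def, Pi.norm_def]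
    apply NNReal.coe_le_coe.mpr
    apply Finset.sup_mono_fun
    intro x _
    simpa [← NNReal.coe_le_coe, nnnorm, Real.norm_eq_abs] using h x
  · have hpt : 0 < p.toReal := ENNReal.toReal_pos (by
      intro h0; exact absurd (h0 ▸ (Fact.out : 1 ≤ p)) (by simp)) hp
    rw [PiLp.norm_eq_sum hpt, PiLp.norm_eq_sum hpt]
    apply Real.rpow_le_rpow (by positivity) _ (by positivity)
    apply Finset.sum_le_sum
    intro x _
    simp only [WithLp.equiv_symm_apply, PiLp.toLp_apply, Real.norm_eq_abs]
    exact Real.rpow_le_rpow (abs_nonneg _) (h x) hpt.le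

private lemma pilp_stoch' {S : Type*} [Fintype S] (p : ENNReal) [Fact (1 ≤ p)]
    (w : S → S → ℝ) (hw : ∀ x y, 0 ≤ w x y) (hrow : ∀ x, ∑ y, w x y = 1)
    (hcol : ∀ y, ∑ x, w x y = 1) (f u : S → ℝ) (hu : ∀ y, 0 ≤ u y)
    (hf : ∀ x, |f x| ≤ ∑ y, w x y * u y) :
    ‖(WithLp.equiv p (S → ℝ)).symm f‖ ≤ ‖(WithLp.equiv p (S → ℝ)).symm u‖ := by
  rcases eq_or_ne p ⊤ with hp | hp
  · subst hp
    rw [WithLp.equiv_symm_apply, PiLp.norm_toLp, PiLp.norm_toLp,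
      pi_norm_le_iff_of_nonneg (norm_nonneg _)]
    intro x
    rw [Real.norm_eq_abs]
    calc |f x| ≤ ∑ y, w x y * u y := hf x
      _ ≤ ∑ y, w x y * ‖u‖ := by
          apply Finset.sum_le_sum
          intro y _
          exact mul_le_mul_of_nonneg_left
            ((le_abs_self _).trans ((Real.norm_eq_abs _).symm ▸ norm_le_pi_norm u y)) (hw x y)
      _ = ‖u‖ := by rw [← Finset.sum_mul, hrow, one_mul]
  · have hpt1 : 1 ≤ p.toReal := by
      have := (Fact.out : 1 ≤ p)
      rw [← ENNReal.toReal_one]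
      exact ENNReal.toReal_mono hp this
    have hpt : 0 < p.toReal := lt_of_lt_of_le one_pos hpt1
    rw [PiLp.norm_eq_sum hpt, PiLp.norm_eq_sum hpt]
    apply Real.rpow_le_rpow (by positivity) _ (by positivity)
    simp only [WithLp.equiv_symm_apply, PiLp.toLp_apply, Real.norm_eq_abs]
    calc ∑ x, |f x| ^ p.toReal
        ≤ ∑ x, (∑ y, w x y * u y) ^ p.toReal := by
          apply Finset.sum_le_sum
          intro x _
          exact Real.rpow_le_rpow (abs_nonneg _) (hf x) hpt.le
      _ ≤ ∑ x, ∑ y, w x y * u y ^ p.toReal := by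
          apply Finset.sum_le_sum
          intro x _
          exact Real.rpow_arith_mean_le_arith_mean_rpow Finset.univ (w x) u
            (fun y _ => hw x y) (hrow x) (fun y _ => hu y) hpt1
      _ = ∑ y, (∑ x, w x y) * u y ^ p.toReal := by
          rw [Finset.sum_comm]
          exact Finset.sum_congr rfl fun y _ => (Finset.sum_mul _ _ _).symm
      _ = ∑ y, |u y| ^ p.toReal := by
          apply Finset.sum_congr rfl
          intro y _
          rw [hcol y, one_mul, abs_of_nonneg (hu y)]

end AuxRLip

theorem R_lp_lipschitz {S : Type*} [Fintype S]
    (ρ : ℝ) (hρ : ρ ∈ Set.Ioc (0:ℝ) 1)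
    (w : S → S → ℝ) (hwsymm : ∀ x y, w x y = w y x)
    (hw : ∀ x y, 0 ≤ w x y) (hnorm : ∀ x, ∑ y, w x y = 1)
    (sε : ℝ → ℝ) (mε : ℝ) (hdiff : Differentiable ℝ sε)
    (hs : ∀ z ∈ Set.Icc (-1:ℝ) 1, |sε z| ≤ 1)
    (hs' : ∀ z ∈ Set.Icc (-1:ℝ) 1, |deriv sε z| ≤ mε)
    (I J : S → ℝ) (hI : ∀ x, I x ∈ Set.Icc ρ 1) (hJ : ∀ x, J x ∈ Set.Icc ρ 1)
    (p : ENNReal) [Fact (1 ≤ p)] :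
    ‖(WithLp.equiv p (S → ℝ)).symm (fun x =>
        (∑ y, w x y * (min (I x) (I y) / max (I x) (I y)) * sε (I x - I y)) -
        (∑ y, w x y * (min (J x) (J y) / max (J x) (J y)) * sε (J x - J y)))‖
      ≤ 2 * (1 / ρ + mε) * ‖(WithLp.equiv p (S → ℝ)).symm (fun x => I x - J x)‖ := by
  obtain ⟨hρ0, hρ1⟩ := hρ
  set C : ℝ := 1/ρ + mε with hCdef
  have hmε : 0 ≤ mε := le_trans (abs_nonneg _) (hs' 0 ⟨by norm_num, by norm_num⟩)
  have hC : 0 ≤ C := add_nonneg (by positivity) hmε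
  set g : ℝ → ℝ → ℝ := fun a b => min a b / max a b * sε (a - b) with hgdef
  have key : ∀ a a' b b' : ℝ, a ∈ Set.Icc ρ 1 → a' ∈ Set.Icc ρ 1 →
      b ∈ Set.Icc ρ 1 → b' ∈ Set.Icc ρ 1 →
      |g a b - g a' b'| ≤ C * (|a - a'| + |b - b'|) := fun a a' b b' ha ha' hb hb' =>
    g_lip' hρ0 hρ1 hdiff hs hs' ha ha' hb hb'
  set A : S → ℝ := fun x => ∑ y, w x y * (g (I x) (I y) - g (J x) (I y)) with hAdef
  set B : S → ℝ := fun x => ∑ y, w x y * (g (J x) (I y) - g (J x) (J y)) with hBdef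
  have hcol : ∀ y, ∑ x, w x y = 1 := fun y =>
    (Finset.sum_congr rfl fun x _ => hwsymm x y).trans (hnorm y)
  have hAB : (fun x =>
      (∑ y, w x y * (min (I x) (I y) / max (I x) (I y)) * sε (I x - I y)) -
      (∑ y, w x y * (min (J x) (J y) / max (J x) (J y)) * sε (J x - J y))) = A + B := by
    funext x
    show _ = A x + B x
    rw [hAdef, hBdef]
    simp only [← Finset.sum_add_distrib]
    rw [← Finset.sum_sub_distrib]
    apply Finset.sum_congr rfl
    intro y _
    simp only [hgdef]
    ring
  rw [hAB, WithLp.equiv_symm_apply, WithLp.toLp_add, ← WithLp.equiv_symm_apply]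
  have hA : ‖(WithLp.equiv p (S → ℝ)).symm A‖
      ≤ ‖(WithLp.equiv p (S → ℝ)).symm (fun x => C * (I x - J x))‖ := by
    apply pilp_mono'
    intro x
    rw [abs_mul, abs_of_nonneg hC]
    calc |A x| ≤ ∑ y, |w x y * (g (I x) (I y) - g (J x) (I y))| :=
          Finset.abs_sum_le_sum_abs _ _
      _ ≤ ∑ y, w x y * (C * |I x - J x|) := by
          apply Finset.sum_le_sum
          intro y _
          rw [abs_mul, abs_of_nonneg (hw x y)]
          apply mul_le_mul_of_nonneg_left _ (hw x y)
          have := key (I x) (J x) (I y) (I y) (hI x) (hJ x) (hI y) (hI y)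
          simpa using this
      _ = C * |I x - J x| := by rw [← Finset.sum_mul, hnorm, one_mul]
  have hB : ‖(WithLp.equiv p (S → ℝ)).symm B‖
      ≤ ‖(WithLp.equiv p (S → ℝ)).symm (fun y => C * |I y - J y|)‖ := by
    apply pilp_stoch' p w hw hnorm hcol
    · intro y; positivity
    · intro x
      calc |B x| ≤ ∑ y, |w x y * (g (J x) (I y) - g (J x) (J y))| :=
            Finset.abs_sum_le_sum_abs _ _
        _ ≤ ∑ y, w x y * (C * |I y - J y|) := by
            apply Finset.sum_le_sum
            intro y _
            rw [abs_mul, abs_of_nonneg (hw x y)]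
            apply mul_le_mul_of_nonneg_left _ (hw x y)
            have := key (J x) (J x) (I y) (J y) (hJ x) (hJ x) (hI y) (hJ y)
            simpa using this
  have hsmul : ∀ v : S → ℝ, ‖(WithLp.equiv p (S → ℝ)).symm (fun x => C * v x)‖
      = C * ‖(WithLp.equiv p (S → ℝ)).symm v‖ := by
    intro v
    have : (fun x => C * v x) = C • v := rfl
    rw [this, WithLp.equiv_symm_apply, WithLp.toLp_smul, norm_smul, Real.norm_eq_abs, abs_of_nonneg hC]
  have habs : ‖(WithLp.equiv p (S → ℝ)).symm (fun x => |I x - J x|)‖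
      = ‖(WithLp.equiv p (S → ℝ)).symm (fun x => I x - J x)‖ :=
    le_antisymm (pilp_mono' p _ _ fun x => by rw [abs_abs])
      (pilp_mono' p _ _ fun x => by rw [abs_abs])
  calc ‖(WithLp.equiv p (S → ℝ)).symm A + (WithLp.equiv p (S → ℝ)).symm B‖
      ≤ ‖(WithLp.equiv p (S → ℝ)).symm A‖ + ‖(WithLp.equiv p (S → ℝ)).symm B‖ :=
        norm_add_le _ _
    _ ≤ C * ‖(WithLp.equiv p (S → ℝ)).symm (fun x => I x - J x)‖
        + C * ‖(WithLp.equiv p (S → ℝ)).symm (fun x => |I x - J x|)‖ := by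
        apply add_le_add
        · rw [← hsmul]; exact hA
        · rw [← hsmul]; exact hB
    _ = 2 * C * ‖(WithLp.equiv p (S → ℝ)).symm (fun x => I x - J x)‖ := by
        rw [habs]; ring
end

section
/- Under the hypotheses: ρ ∈ (0,1], α ≥ 1/(1−2ρ) (in particular ρ < 1/2), β > 0, Δt > 0, I₀ : S → [ρ,1], and R_I(x) ∈ [−1,1] for every I : S → [ρ,1] and x ∈ S, the semi-implicit iteration I^{k+1}(x) = (I^k(x) + Δt(α/2 + β I₀(x) + (1/2) R_{I^k}(x)))/(1 + Δt(α+β)) preserves the constraint ρ ≤ I^k(x) ≤ 1 for all k ≥ 1. -/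
theorem iteration_preserves_constraints {S : Type*} [Fintype S]
    (ρ α β Δt : ℝ) (hρ : 0 < ρ) (hρhalf : ρ < 1/2) (hρ1 : ρ ≤ 1)
    (hα : 1 / (1 - 2 * ρ) ≤ α) (hβ : 0 < β) (hΔt : 0 < Δt)
    (I₀ : S → ℝ) (hI₀ : ∀ x, I₀ x ∈ Set.Icc ρ 1)
    (R : (S → ℝ) → S → ℝ)
    (hR : ∀ I : S → ℝ, (∀ x, I x ∈ Set.Icc ρ 1) → ∀ x, R I x ∈ Set.Icc (-1:ℝ) 1)
    (I : ℕ → S → ℝ) (h0 : ∀ x, I 0 x ∈ Set.Icc ρ 1)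
    (hrec : ∀ k x, I (k+1) x =
      (I k x + Δt * (α / 2 + β * I₀ x + (1/2) * R (I k) x)) / (1 + Δt * (α + β))) :
    ∀ k ≥ 1, ∀ x, ρ ≤ I k x ∧ I k x ≤ 1 := by
  have h2ρ : (0:ℝ) < 1 - 2 * ρ := by linarith
  have hα1 : 1 ≤ α * (1 - 2 * ρ) := by
    rw [div_le_iff₀ h2ρ] at hα; linarith
  have hαpos : (1:ℝ) ≤ α := by nlinarith
  have hden : (0:ℝ) < 1 + Δt * (α + β) := by nlinarith
  have key : ∀ k, ∀ x, I k x ∈ Set.Icc ρ 1 := by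
    intro k
    induction k with
    | zero => exact h0
    | succ n ih =>
      intro x
      have hRx := hR (I n) ih x
      obtain ⟨hR1, hR2⟩ := hRx
      obtain ⟨hI1, hI2⟩ := ih x
      obtain ⟨hI01, hI02⟩ := hI₀ x
      have t1 : 0 ≤ Δt * (α * (1 - 2 * ρ) - 1) := by nlinarith
      have t2 : 0 ≤ Δt * (β * (I₀ x - ρ)) := mul_nonneg hΔt.le (mul_nonneg hβ.le (by linarith))
      have t3 : 0 ≤ Δt * (1 + R (I n) x) := by nlinarith
      have u1 : 0 ≤ Δt * (α - 1) := by nlinarith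
      have u2 : 0 ≤ Δt * (β * (1 - I₀ x)) := mul_nonneg hΔt.le (mul_nonneg hβ.le (by linarith))
      have u3 : 0 ≤ Δt * (1 - R (I n) x) := by nlinarith
      rw [hrec n x]
      constructor
      · rw [le_div_iff₀ hden]; nlinarith
      · rw [div_le_one hden]; nlinarith
  intro k _ x
  exact ⟨(key k x).1, (key k x).2⟩
end

section
/- Suppose R : F_ρ → (S → ℝ) maps F_ρ = {I : S → [ρ,1]} to bounded functions, with ‖R_I − R_Ĩ‖_∞ ≤ 2(1/ρ + m_ε)‖I − Ĩ‖_∞, and suppose α + β > 1/ρ + m_ε. Then the map T(I)(x) = (I(x) + Δt(α/2 + β I₀(x) + (1/2) R_I(x)))/(1 + Δt(α+β)) is a contraction on F_ρ for the sup norm (assuming T maps F_ρ to itself), with contraction factor (1 + Δt(1/ρ + m_ε))/(1 + Δt(α+β)) < 1; consequently there is at most one I* ∈ F_ρ satisfying α(I* − 1/2) + β(I* − I₀) − (1/2)R_{I*} = 0. -/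
theorem semiimplicit_contraction_and_uniqueness {S : Type*} [Fintype S] [Nonempty S]
    (ρ α β Δt mε : ℝ) (hρ : ρ ∈ Set.Ioc (0:ℝ) 1)
    (hα : 0 < α) (hβ : 0 < β) (hΔt : 0 < Δt) (hmε : 0 ≤ mε)
    (hcontr : 1 / ρ + mε < α + β)
    (I₀ : S → ℝ) (hI₀ : ∀ x, I₀ x ∈ Set.Icc ρ 1)
    (R : (S → ℝ) → S → ℝ)
    (hR : ∀ I J : S → ℝ, (∀ x, I x ∈ Set.Icc ρ 1) → (∀ x, J x ∈ Set.Icc ρ 1) →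
      (⨆ x, |R I x - R J x|) ≤ 2 * (1 / ρ + mε) * ⨆ x, |I x - J x|) :
    ((1 + Δt * (1 / ρ + mε)) / (1 + Δt * (α + β)) < 1 ∧
      ∀ I J : S → ℝ, (∀ x, I x ∈ Set.Icc ρ 1) → (∀ x, J x ∈ Set.Icc ρ 1) →
        (⨆ x, |(I x + Δt * (α / 2 + β * I₀ x + (1/2) * R I x)) / (1 + Δt * (α + β)) -
               (J x + Δt * (α / 2 + β * I₀ x + (1/2) * R J x)) / (1 + Δt * (α + β))|)
          ≤ (1 + Δt * (1 / ρ + mε)) / (1 + Δt * (α + β)) * ⨆ x, |I x - J x|) ∧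
    (∀ I J : S → ℝ, (∀ x, I x ∈ Set.Icc ρ 1) → (∀ x, J x ∈ Set.Icc ρ 1) →
      (∀ x, α * (I x - 1/2) + β * (I x - I₀ x) - (1/2) * R I x = 0) →
      (∀ x, α * (J x - 1/2) + β * (J x - I₀ x) - (1/2) * R J x = 0) →
      I = J) := by
  have hρ0 : 0 < ρ := hρ.1
  have hL : 0 < 1 / ρ + mε := by positivity
  have hD : 0 < 1 + Δt * (α + β) := by nlinarith
  have hk : (1 + Δt * (1 / ρ + mε)) / (1 + Δt * (α + β)) < 1 := by
    rw [div_lt_one hD]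
    nlinarith
  have key : ∀ I J : S → ℝ, (∀ x, I x ∈ Set.Icc ρ 1) → (∀ x, J x ∈ Set.Icc ρ 1) →
      (⨆ x, |(I x + Δt * (α / 2 + β * I₀ x + (1/2) * R I x)) / (1 + Δt * (α + β)) -
             (J x + Δt * (α / 2 + β * I₀ x + (1/2) * R J x)) / (1 + Δt * (α + β))|)
        ≤ (1 + Δt * (1 / ρ + mε)) / (1 + Δt * (α + β)) * ⨆ x, |I x - J x| := by
    intro I J hI hJ
    have hbdd : BddAbove (Set.range fun x => |I x - J x|) :=
      (Set.finite_range _).bddAbove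
    have hM0 : 0 ≤ ⨆ x, |I x - J x| :=
      le_trans (abs_nonneg _) (le_ciSup hbdd (Classical.arbitrary S))
    apply ciSup_le
    intro x
    have h1 : |I x - J x| ≤ ⨆ x, |I x - J x| := le_ciSup hbdd x
    have h2 : |R I x - R J x| ≤ 2 * (1 / ρ + mε) * ⨆ x, |I x - J x| :=
      le_trans (le_ciSup (f := fun y => |R I y - R J y|) ((Set.finite_range _).bddAbove) x) (hR I J hI hJ)
    have heq : (I x + Δt * (α / 2 + β * I₀ x + (1/2) * R I x)) / (1 + Δt * (α + β)) -
               (J x + Δt * (α / 2 + β * I₀ x + (1/2) * R J x)) / (1 + Δt * (α + β))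
        = ((I x - J x) + Δt * (1/2) * (R I x - R J x)) / (1 + Δt * (α + β)) := by
      field_simp
      ring
    rw [heq, abs_div, abs_of_pos hD, div_le_iff₀ hD, div_mul_eq_mul_div,
      div_mul_eq_mul_div, mul_div_assoc, div_self (ne_of_gt hD), mul_one]
    calc |I x - J x + Δt * (1/2) * (R I x - R J x)|
        ≤ |I x - J x| + Δt * (1/2) * |R I x - R J x| := by
          refine le_trans (abs_add_le _ _) ?_
          rw [abs_mul, abs_of_pos (by positivity : (0:ℝ) < Δt * (1/2))]
      _ ≤ (1 + Δt * (1 / ρ + mε)) * ⨆ x, |I x - J x| := by nlinarith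
  refine ⟨⟨hk, key⟩, ?_⟩
  intro I J hI hJ hEI hEJ
  have hTI : ∀ x, (I x + Δt * (α / 2 + β * I₀ x + (1/2) * R I x)) / (1 + Δt * (α + β)) = I x := by
    intro x
    have := hEI x
    field_simp
    nlinarith [hEI x]
  have hTJ : ∀ x, (J x + Δt * (α / 2 + β * I₀ x + (1/2) * R J x)) / (1 + Δt * (α + β)) = J x := by
    intro x
    field_simp
    nlinarith [hEJ x]
  have hfix : (⨆ x, |I x - J x|) ≤
      (1 + Δt * (1 / ρ + mε)) / (1 + Δt * (α + β)) * ⨆ x, |I x - J x| := by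
    calc (⨆ x, |I x - J x|)
        = ⨆ x, |(I x + Δt * (α / 2 + β * I₀ x + (1/2) * R I x)) / (1 + Δt * (α + β)) -
               (J x + Δt * (α / 2 + β * I₀ x + (1/2) * R J x)) / (1 + Δt * (α + β))| := by
          exact (iSup_congr fun x => by rw [hTI x, hTJ x]).symm
      _ ≤ _ := key I J hI hJ
  have hbdd : BddAbove (Set.range fun x => |I x - J x|) := (Set.finite_range _).bddAbove
  have hM0 : 0 ≤ ⨆ x, |I x - J x| :=
    le_trans (abs_nonneg _) (le_ciSup hbdd (Classical.arbitrary S))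
  have hMz : (⨆ x, |I x - J x|) ≤ 0 := by nlinarith
  funext x
  have := le_trans (le_ciSup hbdd x) hMz
  have := abs_nonneg (I x - J x)
  have : |I x - J x| = 0 := le_antisymm ‹_› ‹_›
  have := abs_eq_zero.mp this
  linarith
end
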